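/- Suppose limsup_{t→∞} ‖σ(t)‖_F² · log t < +∞. Then for every h > 0 there exists ε₂ > 0 such that S_h'(ε) < +∞ for all ε > ε₂. -/
import Mathlib


open MeasureTheory Filter

/-- The squared Frobenius norm of `σ(s)`. -/
noncomputable def F2 {d r : ℕ} (σ : ℝ → Matrix (Fin d) (Fin r) ℝ) (s : ℝ) : ℝ :=
  ∑ i : Fin d, ∑ j : Fin r, (σ s i j) ^ 2

/-- `θ_h(n)² = ∫_{nh}^{(n+1)h} ‖σ(s)‖_F² ds`. -/
noncomputable def theta2 {d r : ℕ} (σ : ℝ → Matrix (Fin d) (Fin r) ℝ) (h : ℝ) (n : ℕ) : ℝ :=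
  ∫ s in ((n : ℝ) * h)..(((n : ℝ) + 1) * h), F2 σ s

/-- The `n`-th summand of `S_h'(ε)`, taken to be `0` when `θ_h(n) = 0`. -/
noncomputable def Sterm {d r : ℕ} (σ : ℝ → Matrix (Fin d) (Fin r) ℝ) (h ε : ℝ) (n : ℕ) : ℝ :=
  if theta2 σ h n = 0 then 0
  else Real.sqrt (theta2 σ h n) * Real.exp (-(ε ^ 2) / (2 * theta2 σ h n))

/-- `S_h'(ε) = ∑_{n=1}^∞ θ_h(n) exp(-ε²/(2θ_h(n)²)) < +∞`.
Since all summands are nonnegative, finiteness is expressed as summability. -/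
def SFinite {d r : ℕ} (σ : ℝ → Matrix (Fin d) (Fin r) ℝ) (h ε : ℝ) : Prop :=
  Summable fun n : ℕ => Sterm σ h ε (n + 1)

lemma aux_mono (c : ℝ) (hc : 0 ≤ c) {x y : ℝ} (hx : 0 < x) (hxy : x ≤ y) :
    Real.sqrt x * Real.exp (-c / (2 * x)) ≤ Real.sqrt y * Real.exp (-c / (2 * y)) := by
  have hy : 0 < y := lt_of_lt_of_le hx hxy
  refine mul_le_mul (Real.sqrt_le_sqrt hxy) (Real.exp_le_exp.2 ?_) (Real.exp_pos _).le
    (Real.sqrt_nonneg _)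
  rw [neg_div, neg_div, neg_le_neg_iff]
  exact div_le_div_of_nonneg_left hc (by linarith) (by linarith)

lemma F2_nonneg {d r : ℕ} (σ : ℝ → Matrix (Fin d) (Fin r) ℝ) (s : ℝ) : 0 ≤ F2 σ s := by
  unfold F2; positivity

lemma F2_contOn {d r : ℕ} (σ : ℝ → Matrix (Fin d) (Fin r) ℝ)
    (hσ : ContinuousOn σ (Set.Ici 0)) : ContinuousOn (F2 σ) (Set.Ici 0) := by
  unfold F2
  apply continuousOn_finset_sum
  intro i _
  apply continuousOn_finset_sum
  intro j _
  exact (((continuous_apply j).comp_continuousOn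
    ((continuous_apply i).comp_continuousOn hσ))).pow 2

set_option maxHeartbeats 1000000 in
theorem stmt_15 (d r : ℕ) (hd : 1 ≤ d) (hr : 1 ≤ r)
    (σ : ℝ → Matrix (Fin d) (Fin r) ℝ) (hσ : ContinuousOn σ (Set.Ici 0))
    (hlimsup : ∃ C : ℝ, ∀ᶠ t : ℝ in atTop, F2 σ t * Real.log t ≤ C) :
    ∀ h : ℝ, 0 < h → ∃ ε₂ : ℝ, 0 < ε₂ ∧ ∀ ε : ℝ, ε₂ < ε → SFinite σ h ε := by
  intro h hpos
  obtain ⟨C, hC⟩ := hlimsup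
  rw [eventually_atTop] at hC
  obtain ⟨T, hT⟩ := hC
  set C' := max C 1 with hC'def
  have hC'1 : (1 : ℝ) ≤ C' := le_max_right _ _
  have hC'0 : (0 : ℝ) < C' := lt_of_lt_of_le one_pos hC'1
  set A := 2 * h * C' with hAdef
  have hA0 : 0 < A := by positivity
  refine ⟨2 * Real.sqrt A, by positivity, ?_⟩
  intro ε hε
  have hsA : Real.sqrt A ^ 2 = A := Real.sq_sqrt hA0.le
  have hε0 : 0 < ε := lt_trans (by positivity) hε
  have hε2 : 4 * A < ε ^ 2 := by nlinarith [Real.sqrt_nonneg A]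
  set p := ε ^ 2 / (2 * A) with hpdef
  have hp2 : 2 < p := by rw [hpdef, lt_div_iff₀ (by linarith)]; linarith
  obtain ⟨N, hN⟩ := exists_nat_ge (max (max (max T (Real.exp 1) / h) (1 / h ^ 2)) 3)
  -- key pointwise bound
  have key : ∀ n : ℕ, N ≤ n → Sterm σ h ε n ≤ Real.sqrt A * (n : ℝ) ^ (-p) := by
    intro n hn
    have hnR : (N : ℝ) ≤ n := Nat.cast_le.mpr hn
    have hn3 : (3 : ℝ) ≤ n := le_trans (le_trans (le_max_right _ _) hN) hnR
    have hn0 : (0 : ℝ) < n := by linarith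
    have hnh0 : (0 : ℝ) < (n : ℝ) * h := by positivity
    have hMnh : max T (Real.exp 1) ≤ (n : ℝ) * h := by
      have h1 : max T (Real.exp 1) / h ≤ (n : ℝ) :=
        le_trans (le_trans (le_max_left _ _) (le_max_left _ _)) (le_trans hN hnR)
      calc max T (Real.exp 1) = max T (Real.exp 1) / h * h := by field_simp
        _ ≤ (n : ℝ) * h := by nlinarith
    have hTnh : T ≤ (n : ℝ) * h := le_trans (le_max_left _ _) hMnh
    have henh : Real.exp 1 ≤ (n : ℝ) * h := le_trans (le_max_right _ _) hMnh
    have hlog1 : 1 ≤ Real.log ((n : ℝ) * h) := by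
      rw [Real.le_log_iff_exp_le hnh0]; exact henh
    have hlogn1 : 1 ≤ Real.log (n : ℝ) := by
      rw [Real.le_log_iff_exp_le hn0]
      linarith [Real.exp_one_lt_d9.le]
    have hn2 : 1 / h ^ 2 ≤ (n : ℝ) :=
      le_trans (le_trans (le_max_right _ _) (le_max_left _ _)) (le_trans hN hnR)
    have hhalf : Real.log (n : ℝ) / 2 ≤ Real.log ((n : ℝ) * h) := by
      rw [Real.log_mul (ne_of_gt hn0) (ne_of_gt hpos)]
      have : Real.log (1 / h ^ 2) ≤ Real.log (n : ℝ) :=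
        Real.log_le_log (by positivity) hn2
      rw [Real.log_div one_ne_zero (by positivity), Real.log_one, Real.log_pow] at this
      push_cast at this
      linarith
    have hlognh0 : 0 < Real.log ((n : ℝ) * h) := by linarith
    -- theta2 bounds
    have t0 : 0 ≤ theta2 σ h n := by
      apply intervalIntegral.integral_nonneg (by nlinarith)
      intro u _; exact F2_nonneg σ u
    have tub : theta2 σ h n ≤ A / Real.log (n : ℝ) := by
      have hle : (n : ℝ) * h ≤ ((n : ℝ) + 1) * h := by nlinarith
      have hsub : Set.uIcc ((n : ℝ) * h) (((n : ℝ) + 1) * h) ⊆ Set.Ici 0 := by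
        rw [Set.uIcc_of_le hle]
        intro u hu
        exact le_trans hnh0.le hu.1
      have hint : IntervalIntegrable (F2 σ) volume ((n : ℝ) * h) (((n : ℝ) + 1) * h) :=
        ((F2_contOn σ hσ).mono hsub).intervalIntegrable
      have step1 : theta2 σ h n ≤ h * (C' / Real.log ((n : ℝ) * h)) := by
        have := intervalIntegral.integral_mono_on hle hint
          (intervalIntegrable_const (c := C' / Real.log ((n : ℝ) * h)))
          (fun u hu => by
            have hu1 : (n : ℝ) * h ≤ u := hu.1
            have hlogu : Real.log ((n : ℝ) * h) ≤ Real.log u :=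
              Real.log_le_log hnh0 hu1
            have hFu : F2 σ u * Real.log u ≤ C' :=
              le_trans (hT u (le_trans hTnh hu1)) (le_max_left _ _)
            have hlu0 : 0 < Real.log u := by linarith
            rw [div_eq_mul_inv]
            calc F2 σ u = F2 σ u * Real.log u * (Real.log u)⁻¹ := by
                  field_simp
              _ ≤ C' * (Real.log u)⁻¹ := by
                  apply mul_le_mul_of_nonneg_right hFu (by positivity)
              _ ≤ C' * (Real.log ((n : ℝ) * h))⁻¹ := by
                  apply mul_le_mul_of_nonneg_left _ hC'0.le
                  exact inv_anti₀ hlognh0 hlogu)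
        rw [intervalIntegral.integral_const, smul_eq_mul] at this
        calc theta2 σ h n ≤ (((n : ℝ) + 1) * h - (n : ℝ) * h) * (C' / Real.log ((n : ℝ) * h)) :=
              this
          _ = h * (C' / Real.log ((n : ℝ) * h)) := by ring
      calc theta2 σ h n ≤ h * (C' / Real.log ((n : ℝ) * h)) := step1
        _ ≤ h * (C' / (Real.log (n : ℝ) / 2)) := by
            apply mul_le_mul_of_nonneg_left _ hpos.le
            exact div_le_div_of_nonneg_left hC'0.le (by linarith) hhalf
        _ = A / Real.log (n : ℝ) := by
            rw [hAdef]; field_simp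
    have hAl0 : 0 < A / Real.log (n : ℝ) := by positivity
    rw [Sterm]
    split_ifs with hz
    · positivity
    · have hθ0 : 0 < theta2 σ h n := lt_of_le_of_ne t0 (Ne.symm hz)
      calc Real.sqrt (theta2 σ h n) * Real.exp (-(ε ^ 2) / (2 * theta2 σ h n))
          ≤ Real.sqrt (A / Real.log (n : ℝ)) *
            Real.exp (-(ε ^ 2) / (2 * (A / Real.log (n : ℝ)))) := by
            have := aux_mono (ε ^ 2) (by positivity) hθ0 tub
            simpa [neg_div] using this
        _ ≤ Real.sqrt A * (n : ℝ) ^ (-p) := by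
            apply mul_le_mul
            · apply Real.sqrt_le_sqrt
              calc A / Real.log (n : ℝ) ≤ A / 1 :=
                    div_le_div_of_nonneg_left hA0.le one_pos hlogn1
                _ = A := div_one A
            · rw [Real.rpow_def_of_pos hn0]
              apply Real.exp_le_exp.2
              apply le_of_eq
              have hA' : A ≠ 0 := ne_of_gt hA0
              have hlogn0 : Real.log (n : ℝ) ≠ 0 := by linarith
              rw [hpdef]
              field_simp
            · positivity
            · exact Real.sqrt_nonneg _
  -- summability
  rw [_root_.SFinite, ← summable_nat_add_iff N]
  have hsum : Summable (fun n : ℕ => Real.sqrt A * ((n : ℝ)) ^ (-p)) :=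
    (Real.summable_nat_rpow.mpr (by linarith)).mul_left _
  have hsum2 : Summable (fun n : ℕ => Real.sqrt A * (((n + (N + 1) : ℕ) : ℝ)) ^ (-p)) :=
    (summable_nat_add_iff (N + 1)).mpr hsum
  apply Summable.of_nonneg_of_le _ _ hsum2
  · intro n
    rw [Sterm]
    split_ifs with hz
    · exact le_refl 0
    · positivity
  · intro n
    have hle : N ≤ n + N + 1 := by omega
    exact key (n + N + 1) hle
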